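/- arXiv:2305.15643 — 3 statements merged into one kernel-verified Lean document; each statement's English description precedes it below -/
import Mathlib

section
/- (Bounding the Regularization Term.) In the FeDualEx shadow-sequence setting, for every z ∈ Z the following identity holds: η[ψ(ẑ_{r,k+1/2}) − ψ(z)] = Ṽ^{ℓ_{r,k}}_{ω̄_{r,k}}(z) − Ṽ^{ℓ_{r,k+1}}_{ω̄_{r,k+1}}(z) − Ṽ^{ℓ_{r,k}}_{ω̄_{r,k}}(ẑ_{r,k+1/2}) − Ṽ^{ℓ_{r,k+1}}_{ω̄_{r,k+1/2}}(ẑ_{r,k+1}) + η⟨ḡ_{r,k+1/2} − ḡ_{r,k}, ẑ_{r,k+1/2} − ẑ_{r,k+1}⟩ + η⟨ḡ_{r,k+1/2}, z − ẑ_{r,k+1/2}⟩. -/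
open NormedSpace

/-- **Bounding the regularization term (FeDualEx shadow sequence, saddle setting).**
With `ℓ_{r,k} = ℓ + (rK+k)ηψ`, generalized Bregman divergences
`Ṽ^{ℓ_t}_{ς'}(z) = ℓ_t(z) − ℓ_t(z') − ⟨ς', z − z'⟩` (where `z' = ∇ℓ_t^*(ς')` is the
minimizer over `Z` of `z ↦ ℓ_t(z) − ⟨ς, z⟩`), shadow dual updates
`ω̄_{r,k+1/2} = ω̄_{r,k} − η ḡ_{r,k}`, `ω̄_{r,k+1} = ω̄_{r,k} − η ḡ_{r,k+1/2}`, and primal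
shadow points `ẑ`, the regularization term satisfies the stated exact identity. -/
theorem regularization_term_identity_saddle
    {E : Type*} [NormedAddCommGroup E] [NormedSpace ℝ E] [FiniteDimensional ℝ E]
    (Z : Set E) (hZconv : Convex ℝ Z)
    (ψ : E → ℝ) (hψ : ConvexOn ℝ Z ψ)
    (l : E → ℝ) (Dl : E → StrongDual ℝ E) (hl : ∀ z, HasFDerivAt l (Dl z) z)
    (hlstrict : StrictConvexOn ℝ Set.univ l)
    (η : ℝ) (hη : 0 < η)
    (r K k : ℕ) (t : ℕ) (ht : t = r * K + k)
    -- the primal projection `∇ℓ_s^*`: the unique minimizer over `Z` of `ℓ_s(·) − ⟨ς, ·⟩`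
    (proj : ℕ → StrongDual ℝ E → E)
    (hproj_mem : ∀ (s : ℕ) (ς : StrongDual ℝ E), proj s ς ∈ Z)
    (hproj_min : ∀ (s : ℕ) (ς : StrongDual ℝ E), ∀ z ∈ Z,
      l (proj s ς) + (s : ℝ) * η * ψ (proj s ς) - ς (proj s ς)
        ≤ l z + (s : ℝ) * η * ψ z - ς z)
    (hproj_uniq : ∀ (s : ℕ) (ς : StrongDual ℝ E), ∀ z ∈ Z,
      (∀ w ∈ Z, l z + (s : ℝ) * η * ψ z - ς z ≤ l w + (s : ℝ) * η * ψ w - ς w) →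
      z = proj s ς)
    -- shadow dual variables and updates
    (ωbar gk ghalf ωhalf ωnext : StrongDual ℝ E)
    (hωhalf : ωhalf = ωbar - η • gk)
    (hωnext : ωnext = ωbar - η • ghalf)
    -- primal shadow points
    (zk zhalf znext : E)
    (hzk : zk = proj t ωbar)
    (hzhalf : zhalf = proj (t + 1) ωhalf)
    (hznext : znext = proj (t + 1) ωnext) :
    ∀ z ∈ Z,
      η * (ψ zhalf - ψ z)
        = ((l z + (t : ℝ) * η * ψ z) - (l zk + (t : ℝ) * η * ψ zk) - ωbar (z - zk))
          - ((l z + ((t : ℝ) + 1) * η * ψ z)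
              - (l znext + ((t : ℝ) + 1) * η * ψ znext) - ωnext (z - znext))
          - ((l zhalf + (t : ℝ) * η * ψ zhalf)
              - (l zk + (t : ℝ) * η * ψ zk) - ωbar (zhalf - zk))
          - ((l znext + ((t : ℝ) + 1) * η * ψ znext)
              - (l zhalf + ((t : ℝ) + 1) * η * ψ zhalf) - ωhalf (znext - zhalf))
          + η * ((ghalf - gk) (zhalf - znext))
          + η * (ghalf (z - zhalf)) := by
  intro z hz
  subst hωhalf hωnext
  simp only [map_sub, ContinuousLinearMap.sub_apply, ContinuousLinearMap.smul_apply,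
    smul_eq_mul]
  ring
end

section
/- (Bounded client drift.) In the homogeneous FeDualEx setting with bounded stochastic gradients ‖g_m(z;ξ)‖_* ≤ G, for every client m, round r, and local step k ∈ {0, …, K−1}: ‖ẑ_{r,k+1/2} − z^m_{r,k+1/2}‖ ≤ 2η(k+1)G and ‖ẑ_{r,k} − z^m_{r,k}‖ ≤ 2ηkG. -/
open NormedSpace Finset

lemma mean_sub_le {F : Type*} [NormedAddCommGroup F] [NormedSpace ℝ F]
    {M : ℕ} (hM : 0 < M) (v : Fin M → F) {G : ℝ} (hv : ∀ m, ‖v m‖ ≤ G) (m : Fin M) :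
    ‖(M : ℝ)⁻¹ • ∑ m', v m' - v m‖ ≤ 2 * G := by
  have hMR : (0:ℝ) < M := by exact_mod_cast hM
  have h1 : (M : ℝ)⁻¹ • ∑ m', v m' - v m
      = (M : ℝ)⁻¹ • ∑ m', (v m' - v m) := by
    rw [Finset.sum_sub_distrib, smul_sub, Finset.sum_const, Finset.card_univ,
      Fintype.card_fin]
    congr 1
    rw [← Nat.cast_smul_eq_nsmul ℝ, smul_smul, inv_mul_cancel₀ hMR.ne', one_smul]
  rw [h1, norm_smul, norm_inv, Real.norm_natCast]
  have h2 : ‖∑ m', (v m' - v m)‖ ≤ M * (2*G) := by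
    calc ‖∑ m', (v m' - v m)‖ ≤ ∑ m', ‖v m' - v m‖ := norm_sum_le _ _
      _ ≤ ∑ _m' : Fin M, (2*G) := Finset.sum_le_sum (fun m' _ => by
          calc ‖v m' - v m‖ ≤ ‖v m'‖ + ‖v m‖ := norm_sub_le _ _
            _ ≤ 2*G := by linarith [hv m', hv m])
      _ = M * (2*G) := by simp [Finset.sum_const, Finset.card_univ, mul_comm]
  calc (M:ℝ)⁻¹ * ‖∑ m', (v m' - v m)‖ ≤ (M:ℝ)⁻¹ * (M * (2*G)) := by
        exact mul_le_mul_of_nonneg_left h2 (by positivity)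
    _ = 2*G := by field_simp

/-- **Bounded client drift for FeDualEx.**
With bounded stochastic gradients `‖g_m(z;ξ)‖_* ≤ G`, synchronized round starts,
dual updates `ω^m_{r,k+1/2} = ω^m_{r,k} − η g_m(z^m_{r,k};ξ)`,
`ω^m_{r,k+1} = ω^m_{r,k} − η g_m(z^m_{r,k+1/2};ξ)`, and primal images obtained via the
(1-Lipschitz) projection `∇ℓ_{r,k}^*`, for every client `m` and local step `k < K`:
`‖ẑ_{r,k+1/2} − z^m_{r,k+1/2}‖ ≤ 2η(k+1)G` and `‖ẑ_{r,k} − z^m_{r,k}‖ ≤ 2ηkG`. -/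
theorem fedualex_bounded_client_drift
    {E : Type*} [NormedAddCommGroup E] [NormedSpace ℝ E] [FiniteDimensional ℝ E]
    (Z : Set E) (hZconv : Convex ℝ Z)
    (ψ : E → ℝ) (hψ : ConvexOn ℝ Z ψ)
    (l : E → ℝ) (Dl : E → StrongDual ℝ E) (hl : ∀ z, HasFDerivAt l (Dl z) z)
    (hlstrong : ∀ z z' : E, (1 / 2) * ‖z' - z‖ ^ 2 ≤ l z' - l z - Dl z (z' - z))
    (η : ℝ) (hη : 0 < η) (G : ℝ) (hG : 0 ≤ G)
    (M : ℕ) (hM : 0 < M) (K : ℕ) (hK : 0 < K) (r : ℕ)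
    -- the primal projection `∇ℓ_s^*`, which is 1-Lipschitz from dual to primal norm
    (proj : ℕ → StrongDual ℝ E → E)
    (hproj_mem : ∀ (s : ℕ) (ς : StrongDual ℝ E), proj s ς ∈ Z)
    (hproj_min : ∀ (s : ℕ) (ς : StrongDual ℝ E), ∀ z ∈ Z,
      l (proj s ς) + (s : ℝ) * η * ψ (proj s ς) - ς (proj s ς)
        ≤ l z + (s : ℝ) * η * ψ z - ς z)
    (hproj_lip : ∀ (s : ℕ) (ς ς' : StrongDual ℝ E), ‖proj s ς - proj s ς'‖ ≤ ‖ς - ς'‖)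
    -- stochastic gradient values queried within round `r`, bounded by `G`
    (gfull ghalf : Fin M → ℕ → StrongDual ℝ E)
    (hgfull : ∀ m k, ‖gfull m k‖ ≤ G) (hghalf : ∀ m k, ‖ghalf m k‖ ≤ G)
    -- client dual sequences within round `r`, all started from a synchronized state
    (ωm : Fin M → ℕ → StrongDual ℝ E)
    (hsync : ∀ m m', ωm m 0 = ωm m' 0)
    (hωrec : ∀ m k, ωm m (k + 1) = ωm m k - η • ghalf m k)
    -- client primal points
    (zm zmhalf : Fin M → ℕ → E)
    (hzm : ∀ m k, zm m k = proj (r * K + k) (ωm m k))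
    (hzmhalf : ∀ m k, zmhalf m k = proj (r * K + k + 1) (ωm m k - η • gfull m k))
    -- server shadow points
    (zhat zhathalf : ℕ → E)
    (hzhat : ∀ k, zhat k = proj (r * K + k) ((M : ℝ)⁻¹ • ∑ m, ωm m k))
    (hzhathalf : ∀ k, zhathalf k =
      proj (r * K + k + 1)
        ((M : ℝ)⁻¹ • ∑ m, ωm m k - η • ((M : ℝ)⁻¹ • ∑ m, gfull m k))) :
    ∀ (m : Fin M), ∀ k < K,
      ‖zhathalf k - zmhalf m k‖ ≤ 2 * η * ((k : ℝ) + 1) * G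
        ∧ ‖zhat k - zm m k‖ ≤ 2 * η * (k : ℝ) * G := by
  intro m k _
  -- dual drift bound by induction
  have hdual : ∀ k : ℕ, ‖(M : ℝ)⁻¹ • ∑ m', ωm m' k - ωm m k‖ ≤ 2 * η * (k : ℝ) * G := by
    intro k
    induction k with
    | zero =>
      have hMR : (0:ℝ) < M := by exact_mod_cast hM
      have hconst : (∑ m', ωm m' 0) = M • ωm m 0 := by
        rw [Finset.sum_congr rfl (fun m' _ => hsync m' m)]
        simp
      rw [hconst, ← Nat.cast_smul_eq_nsmul ℝ, smul_smul, inv_mul_cancel₀ hMR.ne',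
        one_smul, sub_self, norm_zero]
      simp
    | succ k ih =>
      have hstep : (M : ℝ)⁻¹ • ∑ m', ωm m' (k+1) - ωm m (k+1)
          = ((M : ℝ)⁻¹ • ∑ m', ωm m' k - ωm m k)
            - η • ((M : ℝ)⁻¹ • ∑ m', ghalf m' k - ghalf m k) := by
        simp only [hωrec, Finset.sum_sub_distrib, ← Finset.smul_sum]
        module
      rw [hstep]
      have h1 := mean_sub_le hM (fun m' => ghalf m' k) (fun m' => hghalf m' k) m
      have hb : ‖η • ((M : ℝ)⁻¹ • ∑ m', ghalf m' k - ghalf m k)‖ ≤ η * (2 * G) := by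
        rw [norm_smul, Real.norm_eq_abs, abs_of_pos hη]
        exact mul_le_mul_of_nonneg_left h1 hη.le
      refine le_trans ((norm_sub_le _ _).trans (add_le_add ih hb)) (le_of_eq ?_)
      push_cast; ring
  constructor
  · rw [hzhathalf, hzmhalf]
    refine (hproj_lip _ _ _).trans ?_
    have h1 := mean_sub_le hM (fun m' => gfull m' k) (fun m' => hgfull m' k) m
    have heq : ((M : ℝ)⁻¹ • ∑ m', ωm m' k - η • ((M : ℝ)⁻¹ • ∑ m', gfull m' k))
        - (ωm m k - η • gfull m k)
        = ((M : ℝ)⁻¹ • ∑ m', ωm m' k - ωm m k)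
          - η • ((M : ℝ)⁻¹ • ∑ m', gfull m' k - gfull m k) := by module
    rw [heq]
    calc ‖_ - η • ((M : ℝ)⁻¹ • ∑ m', gfull m' k - gfull m k)‖
        ≤ ‖(M : ℝ)⁻¹ • ∑ m', ωm m' k - ωm m k‖
          + ‖η • ((M : ℝ)⁻¹ • ∑ m', gfull m' k - gfull m k)‖ := norm_sub_le _ _
      _ ≤ 2 * η * (k : ℝ) * G + η * (2 * G) := by
          refine add_le_add (hdual k) ?_
          rw [norm_smul, Real.norm_eq_abs, abs_of_pos hη]
          exact mul_le_mul_of_nonneg_left h1 hη.le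
      _ = 2 * η * ((k : ℝ) + 1) * G := by ring
  · rw [hzhat, hzm]
    exact (hproj_lip _ _ _).trans (hdual k)
end

section
/- (Per-step bound for deterministic composite dual extrapolation.) In the deterministic composite dual extrapolation setting, for any step size η ≤ 1/β and every z ∈ Z: η[ψ(z_{t+1/2}) − ψ(z) + ⟨g(z_{t+1/2}), z_{t+1/2} − z⟩] ≤ Ṽ^{ℓ_t}_{ω_t}(z) − Ṽ^{ℓ_{t+1}}_{ω_{t+1}}(z). -/
open NormedSpace

theorem strong_min_aux {E : Type*} [NormedAddCommGroup E] [NormedSpace ℝ E]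
    (Z : Set E) (hZconv : Convex ℝ Z)
    (ψ : E → ℝ) (hψ : ConvexOn ℝ Z ψ)
    (l : E → ℝ) (Dl : E → StrongDual ℝ E)
    (hlstrong : ∀ z z' : E, (1 / 2) * ‖z' - z‖ ^ 2 ≤ l z' - l z - Dl z (z' - z))
    (c : ℝ) (hc : 0 ≤ c) (ς : StrongDual ℝ E) (z' : E) (hz' : z' ∈ Z)
    (hmin : ∀ w ∈ Z, l z' + c * ψ z' - ς z' ≤ l w + c * ψ w - ς w)
    (z : E) (hz : z ∈ Z) :
    l z' + c * ψ z' - ς z' + (1 / 2) * ‖z - z'‖ ^ 2 ≤ l z + c * ψ z - ς z := by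
  by_cases hzz : z = z'
  · subst hzz
    simp
  have hN : 0 < ‖z - z'‖ ^ 2 := by
    have h : z - z' ≠ 0 := sub_ne_zero.mpr hzz
    exact pow_pos (norm_pos_iff.mpr h) 2
  have key : ∀ lam : ℝ, 0 < lam → lam < 1 →
      (1/2) * (1 - lam) * ‖z - z'‖ ^ 2
        ≤ (l z + c * ψ z - ς z) - (l z' + c * ψ z' - ς z') := by
    intro lam h0 h1
    set w := (1 - lam) • z' + lam • z with hw
    have h1' : (0:ℝ) ≤ 1 - lam := by linarith
    have hwZ : w ∈ Z := hZconv hz' hz h1' h0.le (by ring)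
    have hψw : ψ w ≤ (1 - lam) * ψ z' + lam * ψ z := hψ.2 hz' hz h1' h0.le (by ring)
    have ha := hlstrong w z
    have hb := hlstrong w z'
    have hzw : z - w = (1 - lam) • (z - z') := by rw [hw]; module
    have hz'w : z' - w = (-lam) • (z - z') := by rw [hw]; module
    have hD : lam * Dl w (z - w) + (1 - lam) * Dl w (z' - w) = 0 := by
      rw [hzw, hz'w, map_smul, map_smul]
      simp only [smul_eq_mul]
      ring
    have hnzw : ‖z - w‖ = (1 - lam) * ‖z - z'‖ := by
      rw [hzw, norm_smul, Real.norm_eq_abs, abs_of_nonneg h1']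
    have hnz'w : ‖z' - w‖ = lam * ‖z - z'‖ := by
      rw [hz'w, norm_smul, Real.norm_eq_abs, abs_neg, abs_of_nonneg h0.le]
    rw [hnzw] at ha
    rw [hnz'w] at hb
    have hςw : ς w = (1 - lam) * ς z' + lam * ς z := by
      rw [hw, map_add, map_smul, map_smul]
      simp only [smul_eq_mul]
    have hmw := hmin w hwZ
    have hcψ : c * ψ w ≤ c * ((1 - lam) * ψ z' + lam * ψ z) :=
      mul_le_mul_of_nonneg_left hψw hc
    -- combine: lam*(f z - f z') ≥ (1/2)*lam*(1-lam)*N^2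
    have step : lam * ((1/2) * (1 - lam) * ‖z - z'‖ ^ 2)
        ≤ lam * ((l z + c * ψ z - ς z) - (l z' + c * ψ z' - ς z')) := by
      nlinarith [mul_le_mul_of_nonneg_left ha h0.le,
        mul_le_mul_of_nonneg_left hb h1']
    exact (mul_le_mul_iff_right₀ h0).mp step
  refine le_of_forall_pos_le_add ?_
  intro ε hε
  set lam := min (1/2 : ℝ) (ε / ‖z - z'‖ ^ 2) with hlam
  have h0 : 0 < lam := lt_min (by norm_num) (div_pos hε hN)
  have h1 : lam < 1 := lt_of_le_of_lt (min_le_left _ _) (by norm_num)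
  have hk := key lam h0 h1
  have hle : lam * ‖z - z'‖ ^ 2 ≤ ε := by
    have h2 : lam ≤ ε / ‖z - z'‖ ^ 2 := min_le_right _ _
    have := mul_le_mul_of_nonneg_right h2 hN.le
    rwa [div_mul_cancel₀ _ (ne_of_gt hN)] at this
  nlinarith [hk, hle]

set_option maxHeartbeats 1000000 in
/-- **Per-step bound for deterministic composite dual extrapolation.**
In the deterministic composite dual extrapolation setting (`ψ` convex, `g`
`β`-Lipschitz, `ℓ` Legendre and 1-strongly convex, `ℓ_t = ℓ + tηψ`), for any step
size `η ≤ 1/β` and every `z ∈ Z`: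
`η[ψ(z_{t+1/2}) − ψ(z) + ⟨g(z_{t+1/2}), z_{t+1/2} − z⟩] ≤ Ṽ^{ℓ_t}_{ω_t}(z) − Ṽ^{ℓ_{t+1}}_{ω_{t+1}}(z)`. -/
theorem per_step_deterministic_composite_dual_extrapolation
    {E : Type*} [NormedAddCommGroup E] [NormedSpace ℝ E] [FiniteDimensional ℝ E]
    (Z : Set E) (hZconv : Convex ℝ Z)
    (ψ : E → ℝ) (hψ : ConvexOn ℝ Z ψ)
    (β : ℝ) (hβ : 0 < β)
    (g : E → StrongDual ℝ E)
    (hLip : ∀ z ∈ Z, ∀ z' ∈ Z, ‖g z - g z'‖ ≤ β * ‖z - z'‖)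
    (l : E → ℝ) (Dl : E → StrongDual ℝ E) (hl : ∀ z, HasFDerivAt l (Dl z) z)
    (hlstrict : StrictConvexOn ℝ Set.univ l)
    (hlstrong : ∀ z z' : E, (1 / 2) * ‖z' - z‖ ^ 2 ≤ l z' - l z - Dl z (z' - z))
    (η : ℝ) (hη : 0 < η) (hηβ : η ≤ 1 / β)
    -- the primal projection `∇ℓ_s^*`: the unique minimizer over `Z` of `ℓ_s(·) − ⟨ς, ·⟩`
    (proj : ℕ → StrongDual ℝ E → E)
    (hproj_mem : ∀ (s : ℕ) (ς : StrongDual ℝ E), proj s ς ∈ Z)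
    (hproj_min : ∀ (s : ℕ) (ς : StrongDual ℝ E), ∀ z ∈ Z,
      l (proj s ς) + (s : ℝ) * η * ψ (proj s ς) - ς (proj s ς)
        ≤ l z + (s : ℝ) * η * ψ z - ς z)
    (hproj_uniq : ∀ (s : ℕ) (ς : StrongDual ℝ E), ∀ z ∈ Z,
      (∀ w ∈ Z, l z + (s : ℝ) * η * ψ z - ς z ≤ l w + (s : ℝ) * η * ψ w - ς w) →
      z = proj s ς)
    -- one step of the algorithm
    (t : ℕ) (ωt : StrongDual ℝ E)
    (zt zhalf znext : E) (ωhalf ωnext : StrongDual ℝ E)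
    (hzt : zt = proj t ωt)
    (hωhalf : ωhalf = ωt - η • g zt)
    (hzhalf : zhalf = proj (t + 1) ωhalf)
    (hωnext : ωnext = ωt - η • g zhalf)
    (hznext : znext = proj (t + 1) ωnext) :
    ∀ z ∈ Z,
      η * (ψ zhalf - ψ z + g zhalf (zhalf - z))
        ≤ ((l z + (t : ℝ) * η * ψ z) - (l zt + (t : ℝ) * η * ψ zt) - ωt (z - zt))
          - ((l z + ((t : ℝ) + 1) * η * ψ z)
              - (l znext + ((t : ℝ) + 1) * η * ψ znext) - ωnext (z - znext)) := by
  intro z hz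
  have hmemt : zt ∈ Z := hzt ▸ hproj_mem t ωt
  have hmemh : zhalf ∈ Z := hzhalf ▸ hproj_mem (t + 1) ωhalf
  have hmemn : znext ∈ Z := hznext ▸ hproj_mem (t + 1) ωnext
  have hct : (0:ℝ) ≤ (t : ℝ) * η := by positivity
  have hct1 : (0:ℝ) ≤ ((t:ℝ) + 1) * η := by positivity
  -- strong optimality of zt for ℓ_t - ωt, evaluated at zhalf
  have A := strong_min_aux Z hZconv ψ hψ l Dl hlstrong ((t : ℝ) * η) hct ωt zt hmemt
      (fun w hw => by rw [hzt]; exact hproj_min t ωt w hw) zhalf hmemh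
  -- strong optimality of zhalf for ℓ_{t+1} - ωhalf, evaluated at znext
  have B := strong_min_aux Z hZconv ψ hψ l Dl hlstrong (((t:ℝ) + 1) * η) hct1 ωhalf zhalf hmemh
      (fun w hw => by
        rw [hzhalf]
        have := hproj_min (t + 1) ωhalf w hw
        push_cast at this
        exact this) znext hmemn
  -- Lipschitz / Cauchy-Schwarz bound
  have hηβ' : η * β ≤ 1 := (le_div_iff₀ hβ).mp hηβ
  have hC : η * (g zhalf (zhalf - znext) - g zt (zhalf - znext))
      ≤ (1/2) * ‖zhalf - zt‖ ^ 2 + (1/2) * ‖znext - zhalf‖ ^ 2 := by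
    have h1 : (g zhalf - g zt) (zhalf - znext) ≤ ‖g zhalf - g zt‖ * ‖zhalf - znext‖ :=
      le_trans (le_abs_self _) ((g zhalf - g zt).le_opNorm (zhalf - znext))
    have h2 : ‖g zhalf - g zt‖ ≤ β * ‖zhalf - zt‖ := hLip zhalf hmemh zt hmemt
    have hb0 : (0:ℝ) ≤ ‖zhalf - znext‖ := norm_nonneg _
    have ha0 : (0:ℝ) ≤ ‖zhalf - zt‖ := norm_nonneg _
    have hg0 : (0:ℝ) ≤ ‖g zhalf - g zt‖ := norm_nonneg _
    have hrev : ‖znext - zhalf‖ = ‖zhalf - znext‖ := norm_sub_rev _ _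
    rw [ContinuousLinearMap.sub_apply] at h1
    rw [hrev]
    nlinarith [sq_nonneg (‖zhalf - zt‖ - ‖zhalf - znext‖),
      mul_le_mul_of_nonneg_right h2 hb0,
      mul_le_mul_of_nonneg_left h1 hη.le,
      mul_nonneg ha0 hb0,
      mul_le_mul_of_nonneg_right hηβ' (mul_nonneg ha0 hb0)]
  -- expand dual vectors
  rw [hωnext]
  rw [hωhalf] at B
  simp only [ContinuousLinearMap.sub_apply, ContinuousLinearMap.smul_apply, smul_eq_mul,
    map_sub] at A B hC ⊢
  ring_nf at A B hC ⊢
  linarith [A, B, hC]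
end
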